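/- For every k ≥ 1, every cycle has a consistent (k+1 : k)-colouring with clustering at most k² + 3k − 1. -/

import Mathlib

open SimpleGraph

/-- The strong product of two simple graphs. -/
def strongProd {α β : Type*} (G : SimpleGraph α) (H : SimpleGraph β) :
    SimpleGraph (α × β) where
  Adj x y := x ≠ y ∧ (x.1 = y.1 ∨ G.Adj x.1 y.1) ∧ (x.2 = y.2 ∨ H.Adj x.2 y.2)
  symm := ⟨fun x y => by
    rintro ⟨h1, h2, h3⟩
    exact ⟨h1.symm, h2.imp Eq.symm (fun h => G.symm.symm _ _ h), h3.imp Eq.symm (fun h => H.symm.symm _ _ h)⟩⟩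
  loopless := ⟨fun x => by simp⟩

/-- The strong product of a family of simple graphs. -/
def strongProdPi {d : ℕ} {V : Fin d → Type*} (G : ∀ i, SimpleGraph (V i)) :
    SimpleGraph (∀ i, V i) where
  Adj x y := x ≠ y ∧ ∀ i, x i = y i ∨ (G i).Adj (x i) (y i)
  symm := ⟨fun x y ⟨h1, h2⟩ => ⟨h1.symm, fun i => (h2 i).imp Eq.symm (fun h => (G i).symm.symm _ _ h)⟩⟩
  loopless := ⟨fun x => by simp⟩

/-- Every connected component of the subgraph of `G` induced on `S` has at most `c`
vertices. -/
def ClusterBound {α : Type*} (G : SimpleGraph α) (S : Set α) (c : ℕ) : Prop :=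
  ∀ v : S, ((G.induce S).connectedComponentMk v).supp.ncard ≤ c

/-- `G` has a `k`-colouring with clustering `c`. -/
def HasClusteredColoring {α : Type*} (G : SimpleGraph α) (k c : ℕ) : Prop :=
  ∃ f : α → Fin k, ∀ i : Fin k, ClusterBound G {v | f v = i} c

/-- `f` is a `(p:q)`-colouring: each vertex gets a `q`-element subset of `Fin p`. -/
def IsPQColoring {α : Type*} (p q : ℕ) (f : α → Finset (Fin p)) : Prop :=
  ∀ v, (f v).card = q

/-- `f` is a proper `(p:q)`-colouring of `G`. -/
def IsProperPQColoring {α : Type*} (G : SimpleGraph α) (p q : ℕ)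
    (f : α → Finset (Fin p)) : Prop :=
  IsPQColoring p q f ∧ ∀ ⦃x y⦄, G.Adj x y → Disjoint (f x) (f y)

/-- The set-colouring `f` has clustering `c`: for each colour, each monochromatic
component has at most `c` vertices. -/
def PQClusterBound {α : Type*} (G : SimpleGraph α) {p : ℕ}
    (f : α → Finset (Fin p)) (c : ℕ) : Prop :=
  ∀ i : Fin p, ClusterBound G {v | i ∈ f v} c

/-- `G` has a `(p:q)`-colouring with clustering `c`. -/
def HasPQClusteredColoring {α : Type*} (G : SimpleGraph α) (p q c : ℕ) : Prop :=
  ∃ f : α → Finset (Fin p), IsPQColoring p q f ∧ PQClusterBound G f c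

/-- `ord` is a consistent `(p:q)`-colouring of `G` (each vertex's `q` colours are ordered,
with the `i`-th colour of `x` different from the `j`-th colour of `y` for every edge `xy`
and all distinct `i, j`). -/
def IsConsistentPQColoring {α : Type*} (G : SimpleGraph α) (p q : ℕ)
    (ord : α → Fin q → Fin p) : Prop :=
  (∀ v, Function.Injective (ord v)) ∧
    ∀ ⦃x y⦄, G.Adj x y → ∀ i j : Fin q, i ≠ j → ord x i ≠ ord y j

/-- The colour set of a vertex in an ordered colouring. -/
def ordColors {α : Type*} {p q : ℕ} (ord : α → Fin q → Fin p) (v : α) : Finset (Fin p) :=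
  Finset.image (ord v) Finset.univ

/-- `G` has a consistent `(p:q)`-colouring with clustering `c`. -/
def HasConsistentClusteredColoring {α : Type*} (G : SimpleGraph α) (p q c : ℕ) : Prop :=
  ∃ ord : α → Fin q → Fin p, IsConsistentPQColoring G p q ord ∧
    PQClusterBound G (ordColors ord) c

/-- The fractional chromatic number of `G`: the infimum of `p/q` over proper
`(p:q)`-colourings of `G`. -/
noncomputable def fracChrom {α : Type*} (G : SimpleGraph α) : ℝ :=
  sInf {t : ℝ | ∃ p q : ℕ, 0 < q ∧
    (∃ f : α → Finset (Fin p), IsProperPQColoring G p q f) ∧ t = (p : ℝ) / q}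

/-- The independence number of `G`. -/
noncomputable def indepNum {α : Type*} (G : SimpleGraph α) : ℕ :=
  sSup {n | ∃ s : Finset α, (∀ x ∈ s, ∀ y ∈ s, ¬ G.Adj x y) ∧ s.card = n}


/-!
Give every vertex `v` all colours of `{0, …, k}` but one, `h v`, listed in increasing order.
This is consistent as soon as `h` changes by at most one along edges, and the monochromatic
components of colour `i` are the components of `{h ≠ i}`. On a cycle of length `n ≥ 4k - 1`
cut the vertices into `B` consecutive blocks of one or two vertices, with `2k ∣ B`, and let `h`
follow the triangle wave `0, 1, …, k, k - 1, …, 1` from block to block. Every colour is omitted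
at least once in any `2k` consecutive blocks, so a component lies in `2k - 1` consecutive blocks
and has at most `4k - 2 ≤ k² + 3k - 1` vertices; shorter cycles have no larger components.
-/

section HeightColoring

variable {α : Type*} {G : SimpleGraph α} {k c c' : ℕ}

theorem ClusterBound.mono {S : Set α} (h : ClusterBound G S c) (hc : c ≤ c') :
    ClusterBound G S c' :=
  fun v => (h v).trans hc

theorem HasConsistentClusteredColoring.mono {p q : ℕ}
    (h : HasConsistentClusteredColoring G p q c) (hc : c ≤ c') :
    HasConsistentClusteredColoring G p q c' :=
  let ⟨ord, hord, hclu⟩ := h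
  ⟨ord, hord, fun i => (hclu i).mono hc⟩

theorem clusterBound_of_card_le [Finite α] (S : Set α) (h : Nat.card α ≤ c) :
    ClusterBound G S c := fun _ =>
  calc _ ≤ Nat.card S := Set.ncard_le_card _
    _ ≤ Nat.card α := Nat.card_le_card_of_injective _ Subtype.val_injective
    _ ≤ c := h

theorem isConsistentPQColoring_succAbove (h : α → Fin (k + 1))
    (hh : ∀ ⦃x y⦄, G.Adj x y → (h x : ℕ) ≤ h y + 1) :
    IsConsistentPQColoring G (k + 1) k (fun v => (h v).succAbove) := by
  refine ⟨fun _ => Fin.succAbove_right_injective, fun x y hxy i j hij hc => ?_⟩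
  have := hh hxy
  have := hh hxy.symm
  rw [Fin.ext_iff] at hc
  rw [Ne, Fin.ext_iff] at hij
  simp only [Fin.succAbove, Fin.lt_def, Fin.val_castSucc] at hc
  split_ifs at hc <;> simp only [Fin.val_castSucc, Fin.val_succ] at hc <;> omega

theorem hasConsistentClusteredColoring_of_height (h : α → Fin (k + 1))
    (hh : ∀ ⦃x y⦄, G.Adj x y → (h x : ℕ) ≤ h y + 1)
    (hclu : ∀ i, ClusterBound G {v | h v ≠ i} c) :
    HasConsistentClusteredColoring G (k + 1) k c := by
  refine ⟨_, isConsistentPQColoring_succAbove h hh, fun i => ?_⟩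
  simpa [ordColors, Fin.image_succAbove_univ, eq_comm] using hclu i

end HeightColoring

theorem SimpleGraph.Reachable.mem_of_adj_closed {V : Type*} {G : SimpleGraph V} {T : Set V}
    (hT : ∀ ⦃u w⦄, u ∈ T → G.Adj u w → w ∈ T) {u w : V} (h : G.Reachable u w)
    (hu : u ∈ T) :
    w ∈ T := by
  obtain ⟨p⟩ := h
  induction p with
  | nil => exact hu
  | cons hadj _ ih => exact ih (hT hu hadj)

theorem cycleGraph_adj_eq_add_one {n : ℕ} [NeZero n] {u w : Fin n}
    (h : (cycleGraph n).Adj u w) : w = u + 1 ∨ u = w + 1 := by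
  obtain _ | _ | m := n
  · exact u.elim0
  · exact absurd h cycleGraph_one_adj
  · rw [cycleGraph_adj, sub_eq_iff_eq_add', sub_eq_iff_eq_add'] at h
    exact h.symm

open Fin.NatCast in
/-- `J` consists of lifts to `ℕ` of vertices of the cycle and is closed under the steps of
`(cycleGraph n).induce S`; `0 ∉ J` makes every step down liftable. -/
theorem ncard_supp_induce_cycleGraph_le {n : ℕ} [NeZero n] {S : Set (Fin n)} {J : Set ℕ}
    (hJ : J.Finite) (hJ0 : 0 ∉ J)
    (hstep : ∀ x ∈ J, ∀ y, (y = x + 1 ∨ y + 1 = x) → (y : Fin n) ∈ S → y ∈ J)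
    (v : S) {x : ℕ} (hx : x ∈ J) (hxv : (x : Fin n) = v) :
    ((cycleGraph n).induce S |>.connectedComponentMk v).supp.ncard ≤ J.ncard := by
  have hclosed : ∀ ⦃u w : S⦄, (u : Fin n) ∈ Nat.cast '' J →
      ((cycleGraph n).induce S).Adj u w → (w : Fin n) ∈ Nat.cast '' J := by
    rintro u w ⟨x, hx, hxu⟩ (huw : (cycleGraph n).Adj u w)
    rcases cycleGraph_adj_eq_add_one huw with hw | hu
    · have hwx : (w : Fin n) = (x + 1 : ℕ) := by rw [hw, ← hxu, Nat.cast_succ]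
      exact ⟨x + 1, hstep x hx _ (.inl rfl) (hwx ▸ w.2), hwx.symm⟩
    · obtain ⟨y, rfl⟩ := Nat.exists_eq_add_one_of_ne_zero (ne_of_mem_of_not_mem hx hJ0)
      have hwy : (w : Fin n) = y := by rwa [← hxu, Nat.cast_succ, add_left_inj, eq_comm] at hu
      exact ⟨y, hstep _ hx y (.inr rfl) (hwy ▸ w.2), hwy.symm⟩
  calc _ ≤ (Nat.cast '' J : Set (Fin n)).ncard :=
        Set.ncard_le_ncard_of_injOn Subtype.val
          (fun u hu => Reachable.mem_of_adj_closed hclosed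
            (ConnectedComponent.exact hu).symm ⟨x, hx, hxv⟩)
          Subtype.val_injective.injOn (Set.toFinite _)
    _ ≤ J.ncard := Set.ncard_image_le hJ

section TriangleWave

def triangleWave (k j : ℕ) : ℕ := min (j % (2 * k)) (2 * k - j % (2 * k))

variable {k : ℕ}

theorem triangleWave_le (j : ℕ) : triangleWave k j ≤ k := by
  unfold triangleWave
  omega

theorem triangleWave_add_two_mul_mul (j m : ℕ) :
    triangleWave k (j + 2 * k * m) = triangleWave k j := by
  simp only [triangleWave, Nat.add_mul_mod_self_left]

theorem triangleWave_of_le (hk : 0 < k) {i : ℕ} (hi : i ≤ k) : triangleWave k i = i := by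
  rw [triangleWave, Nat.mod_eq_of_lt (by omega)]
  omega

theorem triangleWave_succ_le_and_le_succ (hk : 0 < k) (j : ℕ) :
    triangleWave k (j + 1) ≤ triangleWave k j + 1 ∧
      triangleWave k j ≤ triangleWave k (j + 1) + 1 := by
  have hlt : j % (2 * k) < 2 * k := Nat.mod_lt _ (by omega)
  have hsucc : (j + 1) % (2 * k) = (j % (2 * k) + 1) % (2 * k) := (Nat.mod_add_mod ..).symm
  unfold triangleWave
  rcases Nat.lt_or_ge (j % (2 * k) + 1) (2 * k) with h | h
  · rw [hsucc, Nat.mod_eq_of_lt h]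
    omega
  · rw [hsucc, show j % (2 * k) + 1 = 2 * k by omega, Nat.mod_self]
    omega

theorem exists_triangleWave_eq_of_lt (hk : 0 < k) {i b : ℕ} (hik : i ≤ k) (hib : i ≤ b)
    (hb : triangleWave k b ≠ i) : ∃ a, a < b ∧ b < a + 2 * k ∧ triangleWave k a = i := by
  have hi : triangleWave k i = i := triangleWave_of_le hk hik
  set a := Nat.findGreatest (fun t => triangleWave k t = i) b
  have ha : triangleWave k a = i := Nat.findGreatest_spec (P := fun t => _ = i) hib hi
  have hab : a ≤ b := Nat.findGreatest_le b
  refine ⟨a, hab.lt_of_ne fun h => hb (h ▸ ha), not_le.mp fun h => ?_, ha⟩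
  have := Nat.le_findGreatest (P := fun t => _ = i) h
    (by simpa using (triangleWave_add_two_mul_mul a 1).trans ha)
  omega

end TriangleWave

section Blocks

theorem Nat.exists_subset_Ico_of_forall_sub_lt {S : Set ℕ} {d : ℕ}
    (h : ∀ x ∈ S, ∀ y ∈ S, x ≤ y → y - x < d) : ∃ m, S ⊆ Set.Ico m (m + d) := by
  rcases S.eq_empty_or_nonempty with rfl | hS
  · exact ⟨0, Set.empty_subset _⟩
  refine ⟨sInf S, fun y hy => ⟨Nat.sInf_le hy, ?_⟩⟩
  have := h _ (Nat.sInf_mem hS) y hy (Nat.sInf_le hy)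
  omega

variable {n B : ℕ}

theorem sub_lt_of_div_mem_Ioo (hn : 0 < n) {s a g x y : ℕ} (hnB : n ≤ s * B) (hxy : x ≤ y)
    (hx : a < x * B / n) (hy : y * B / n < a + g) : y - x < s * (g - 1) := by
  rw [← Nat.add_one_le_iff, Nat.le_div_iff_mul_le hn] at hx
  rw [Nat.div_lt_iff_lt_mul hn] at hy
  have hxyB : x * B ≤ y * B := Nat.mul_le_mul_right B hxy
  have hg : 1 ≤ g := by by_contra! hg; nlinarith
  have hB : (y - x) * B < (g - 1) * n := by
    zify [hxy, hg] at hx hy ⊢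
    linarith
  refine Nat.lt_of_mul_lt_mul_right (a := B) (hB.trans_le ?_)
  calc (g - 1) * n ≤ (g - 1) * (s * B) := Nat.mul_le_mul_left _ hnB
    _ = s * (g - 1) * B := by ring

theorem succ_mul_div_eq_or (hn : 0 < n) (hBn : B ≤ n) (x : ℕ) :
    (x + 1) * B / n = x * B / n ∨ (x + 1) * B / n = x * B / n + 1 := by
  have hle : (x + 1) * B / n ≤ x * B / n + 1 :=
    calc (x + 1) * B / n ≤ (x * B + n) / n := Nat.div_le_div_right (by rw [add_one_mul]; omega)
      _ = x * B / n + 1 := Nat.add_div_right _ hn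
  have hge : x * B / n ≤ (x + 1) * B / n :=
    Nat.div_le_div_right (Nat.mul_le_mul_right B x.le_succ)
  omega

theorem add_mul_mul_div (hn : 0 < n) (x q : ℕ) : (x + n * q) * B / n = x * B / n + q * B := by
  rw [add_mul, mul_assoc, Nat.add_mul_div_left _ _ hn]

end Blocks

section BlockWave

/-- The triangle wave read off at the block `x * B / n` of `x`, for `B` blocks of `n` points. -/
def blockWave (n B k x : ℕ) : ℕ := triangleWave k (x * B / n)

variable {n B k : ℕ}

theorem blockWave_mod (hn : 0 < n) (hkB : 2 * k ∣ B) (x : ℕ) :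
    blockWave n B k (x % n) = blockWave n B k x := by
  obtain ⟨m, rfl⟩ := hkB
  conv_rhs => rw [← Nat.mod_add_div x n]
  rw [blockWave, blockWave, add_mul_mul_div hn,
    show x / n * (2 * k * m) = 2 * k * (m * (x / n)) by ring, triangleWave_add_two_mul_mul]

theorem blockWave_succ_le_and_le_succ (hn : 0 < n) (hBn : B ≤ n) (hk : 0 < k) (x : ℕ) :
    blockWave n B k (x + 1) ≤ blockWave n B k x + 1 ∧
      blockWave n B k x ≤ blockWave n B k (x + 1) + 1 := by
  rcases succ_mul_div_eq_or hn hBn x with h | h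
  · simp only [blockWave, h]; omega
  · simp only [blockWave, h]; exact triangleWave_succ_le_and_le_succ hk _

end BlockWave

open Fin.NatCast in
theorem cycleGraph_hasConsistentClusteredColoring_of_dvd {n k B s : ℕ} [NeZero n] (hk : 0 < k)
    (hBn : B ≤ n) (hnB : n ≤ s * B) (hkB : 2 * k ∣ B) :
    HasConsistentClusteredColoring (cycleGraph n) (k + 1) k (s * (2 * k - 1)) := by
  have hn : 0 < n := Nat.pos_of_neZero n
  have hk_le_B : k ≤ B := (Nat.le_mul_of_pos_left k two_pos).trans
    (Nat.le_of_dvd (Nat.pos_of_ne_zero (by rintro rfl; omega)) hkB)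
  have hcast : ∀ x : ℕ, blockWave n B k (x : Fin n) = blockWave n B k x := fun x => by
    rw [Fin.val_natCast, blockWave_mod hn hkB]
  let h : Fin n → Fin (k + 1) := fun v =>
    ⟨blockWave n B k v, Nat.lt_succ_of_le (triangleWave_le _)⟩
  refine hasConsistentClusteredColoring_of_height h (fun u w huw => ?_) (fun i v => ?_)
  · have hsucc : ∀ v : Fin n, blockWave n B k (v + 1 : Fin n) = blockWave n B k (v + 1 : ℕ) :=
      fun v => by rw [← hcast ((v : ℕ) + 1), Nat.cast_succ, Fin.cast_val_eq_self]
    rcases cycleGraph_adj_eq_add_one huw with rfl | rfl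
    · exact (hsucc u ▸ blockWave_succ_le_and_le_succ hn hBn hk u).2
    · exact (hsucc w ▸ blockWave_succ_le_and_le_succ hn hBn hk w).1
  · have hb : (v + n : ℕ) * B / n = v * B / n + B := by
      simpa using add_mul_mul_div (B := B) hn v 1
    have hv : blockWave n B k (v + n) ≠ i := by
      rw [← blockWave_mod hn hkB, Nat.add_mod_right, Nat.mod_eq_of_lt v.1.2]
      exact fun e => v.2 (Fin.ext e)
    obtain ⟨a, hab, hba, ha⟩ := exists_triangleWave_eq_of_lt hk (Nat.le_of_lt_succ i.2)
      (hb ▸ (Nat.le_of_lt_succ i.2).trans (hk_le_B.trans (Nat.le_add_left _ _))) hv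
    have ha' : triangleWave k (a + 2 * k) = i := by
      simpa using (triangleWave_add_two_mul_mul a 1).trans ha
    -- colour `i` is omitted in blocks `a` and `a + 2 * k`, which trap the component of `v`
    set J : Set ℕ := {x | a < x * B / n ∧ x * B / n < a + 2 * k}
    obtain ⟨m, hJ⟩ := Nat.exists_subset_Ico_of_forall_sub_lt (S := J) (d := s * (2 * k - 1))
      fun x hx y hy hxy => sub_lt_of_div_mem_Ioo hn hnB hxy hx.1 hy.2
    have hstep : ∀ x ∈ J, ∀ y, (y = x + 1 ∨ y + 1 = x) →
        (y : Fin n) ∈ {v | h v ≠ i} → y ∈ J := by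
      rintro x ⟨hax, hxa⟩ y hxy hy
      have hy : triangleWave k (y * B / n) ≠ i := fun e => hy (Fin.ext ((hcast y).trans e))
      have hya : y * B / n ≠ a := fun e => hy (e ▸ ha)
      have hya' : y * B / n ≠ a + 2 * k := fun e => hy (e ▸ ha')
      rcases hxy with rfl | rfl
      · have := succ_mul_div_eq_or hn hBn x
        exact ⟨by omega, by omega⟩
      · have := succ_mul_div_eq_or hn hBn y
        exact ⟨by omega, by omega⟩
    calc _ ≤ J.ncard := ncard_supp_induce_cycleGraph_le ((Set.finite_Ico _ _).subset hJ)
          (by simp [J]) hstep v (x := v + n) ⟨by omega, by omega⟩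
          (by rw [Nat.cast_add, Fin.natCast_self, add_zero, Fin.cast_val_eq_self])
      _ ≤ (Set.Ico m (m + s * (2 * k - 1))).ncard := Set.ncard_le_ncard hJ (Set.finite_Ico _ _)
      _ = s * (2 * k - 1) := by simp

theorem cycleGraph_hasConsistentClusteredColoring (n : ℕ) {k : ℕ} (hk : 0 < k) :
    HasConsistentClusteredColoring (cycleGraph n) (k + 1) k (4 * k - 2) := by
  by_cases hn : n ≤ 4 * k - 2
  · exact hasConsistentClusteredColoring_of_height (fun _ => 0) (by simp)
      fun i => clusterBound_of_card_le _ (by simpa using hn)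
  have : NeZero n := ⟨by omega⟩
  have hq : 2 * k ≤ 2 * k * (n / (2 * k)) :=
    Nat.le_mul_of_pos_right _ (Nat.div_pos (by omega) (by omega))
  have hnB : n ≤ 2 * (2 * k * (n / (2 * k))) := by
    have := Nat.div_add_mod n (2 * k)
    have := Nat.mod_lt n (show 0 < 2 * k by omega)
    omega
  convert cycleGraph_hasConsistentClusteredColoring_of_dvd hk (Nat.mul_div_le n (2 * k)) hnB
    (dvd_mul_right _ _) using 1
  omega

theorem stmt13_general (n k : ℕ) (hk : 1 ≤ k) :
    HasConsistentClusteredColoring (SimpleGraph.cycleGraph n) (k + 1) k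
      (k ^ 2 + 3 * k - 1) :=
  (cycleGraph_hasConsistentClusteredColoring n hk).mono
    (by have := Nat.le_self_pow two_ne_zero k; omega)

theorem stmt13 (n k : ℕ) (hn : 3 ≤ n) (hk : 1 ≤ k) :
    HasConsistentClusteredColoring (SimpleGraph.cycleGraph n) (k + 1) k
      (k ^ 2 + 3 * k - 1) :=
  stmt13_general n k hk
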